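/- arXiv:2109.10529 — 4 statements merged into one kernel-verified Lean document; each statement's English description precedes it below -/
import Mathlib

section
/- Let n ≥ 1, let d_0, …, d_n and x_0, …, x_{n-1} be complex numbers, and define A_m, B_m by the Wallis recurrence A_{-2} = 0, B_{-2} = 1, A_{-1} = 1, B_{-1} = 0, A_m = d_m·A_{m-1} + (X − x_{m-1})·A_{m-2}, B_m = d_m·B_{m-1} + (X − x_{m-1})·B_{m-2}. Then every common polynomial divisor of A_n and B_n in ℂ[X] divides the polynomial ∏_{j=0}^{n-1}(X − x_j). In particular, if the x_j are pairwise distinct, every common root of A_n and B_n is a simple root of gcd(A_n, B_n). -/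
open Polynomial

/-- Wallis numerator polynomials of the Thiele-type continued fraction
`d₀ + (x − x₀)/(d₁ + (x − x₁)/(d₂ + …))`, with index shifted by 2:
`wA d xs 0 = A₋₂ = 0`, `wA d xs 1 = A₋₁ = 1`, `wA d xs (m+2) = A_m`. -/
noncomputable def wA (d xs : ℕ → ℂ) : ℕ → ℂ[X]
  | 0 => 0
  | 1 => 1
  | 2 => C (d 0)
  | (m + 3) => C (d (m + 1)) * wA d xs (m + 2) + (X - C (xs m)) * wA d xs (m + 1)

/-- Wallis denominator polynomials, with index shifted by 2:
`wB d xs 0 = B₋₂ = 1`, `wB d xs 1 = B₋₁ = 0`, `wB d xs (m+2) = B_m`. -/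
noncomputable def wB (d xs : ℕ → ℂ) : ℕ → ℂ[X]
  | 0 => 1
  | 1 => 0
  | 2 => 1
  | (m + 3) => C (d (m + 1)) * wB d xs (m + 2) + (X - C (xs m)) * wB d xs (m + 1)
lemma det_id (d xs : ℕ → ℂ) : ∀ m : ℕ,
    wA d xs (m+2) * wB d xs (m+1) - wA d xs (m+1) * wB d xs (m+2)
      = (-1)^(m+1) * ∏ j ∈ Finset.range m, (X - C (xs j)) := by
  intro m
  induction m with
  | zero => simp [wA, wB]
  | succ m ih =>
      rw [show m+1+2 = m+3 from rfl, wA, wB, Finset.prod_range_succ, pow_succ]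
      ring_nf
      ring_nf at ih
      linear_combination (-(X : ℂ[X]) + C (xs m)) * ih

lemma rm_prod (xs : ℕ → ℂ) (z : ℂ) (s : Finset ℕ) :
    rootMultiplicity z (∏ j ∈ s, (X - C (xs j)))
      = (s.filter (fun j => xs j = z)).card := by
  classical
  induction s using Finset.induction with
  | empty => simp
  | insert _ _ hj ih =>
      rename_i a s
      rw [Finset.prod_insert hj, rootMultiplicity_mul, ih, Finset.filter_insert]
      · split <;> rename_i h
        · rw [rootMultiplicity_X_sub_C, if_pos h.symm,
            Finset.card_insert_of_notMem (by simp [hj])]; omega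
        · rw [rootMultiplicity_X_sub_C, if_neg (fun hh => h hh.symm), zero_add]
      · exact mul_ne_zero (X_sub_C_ne_zero _)
          (Finset.prod_ne_zero_iff.mpr fun j _ => X_sub_C_ne_zero _)

/-- Every common polynomial divisor of the Wallis numerator `A_n` and denominator `B_n`
divides `∏_{j=0}^{n-1}(X − x_j)`; in particular, if the `x_j` are pairwise distinct, every
common root of `A_n` and `B_n` is a simple root of `gcd(A_n, B_n)`. -/
theorem thiele_common_divisor (n : ℕ) (hn : 1 ≤ n) (d xs : ℕ → ℂ) :
    (∀ p : ℂ[X], p ∣ wA d xs (n + 2) → p ∣ wB d xs (n + 2) →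
        p ∣ ∏ j ∈ Finset.range n, (X - C (xs j))) ∧
    ((∀ i < n, ∀ j < n, xs i = xs j → i = j) →
      ∀ z : ℂ, (wA d xs (n + 2)).eval z = 0 → (wB d xs (n + 2)).eval z = 0 →
        Polynomial.rootMultiplicity z
          (EuclideanDomain.gcd (wA d xs (n + 2)) (wB d xs (n + 2))) = 1) := by
  classical
  set P : ℂ[X] := ∏ j ∈ Finset.range n, (X - C (xs j)) with hP
  have hPne : P ≠ 0 := Finset.prod_ne_zero_iff.mpr fun j _ => X_sub_C_ne_zero _
  have hdvd : ∀ p : ℂ[X], p ∣ wA d xs (n + 2) → p ∣ wB d xs (n + 2) → p ∣ P := by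
    intro p hA hB
    have h1 : p ∣ wA d xs (n+2) * wB d xs (n+1) - wA d xs (n+1) * wB d xs (n+2) :=
      dvd_sub (hA.mul_right _) (hB.mul_left _)
    rw [det_id d xs n] at h1
    have h3 : p ∣ (-1:ℂ[X])^(n+1) * ((-1)^(n+1) * P) := h1.mul_left _
    simpa [← mul_assoc, ← mul_pow] using h3
  refine ⟨hdvd, fun hinj z hzA hzB => ?_⟩
  set g := EuclideanDomain.gcd (wA d xs (n + 2)) (wB d xs (n + 2)) with hg
  have hgP : g ∣ P :=
    hdvd g (EuclideanDomain.gcd_dvd_left _ _) (EuclideanDomain.gcd_dvd_right _ _)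
  have hgne : g ≠ 0 := fun h0 => hPne (zero_dvd_iff.mp (h0 ▸ hgP))
  have hzg : (X - C z) ∣ g :=
    EuclideanDomain.dvd_gcd (dvd_iff_isRoot.mpr hzA) (dvd_iff_isRoot.mpr hzB)
  have h1 : 1 ≤ rootMultiplicity z g :=
    (rootMultiplicity_pos hgne).mpr (dvd_iff_isRoot.mp hzg)
  have hle : rootMultiplicity z g ≤ rootMultiplicity z P := by
    obtain ⟨c, hc⟩ := hgP
    have hcne : g * c ≠ 0 := hc ▸ hPne
    rw [hc, rootMultiplicity_mul hcne]
    exact Nat.le_add_right _ _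
  have hPle : rootMultiplicity z P ≤ 1 := by
    rw [hP, rm_prod]
    rw [Finset.card_le_one]
    intro a ha b hb
    simp only [Finset.mem_filter, Finset.mem_range] at ha hb
    exact hinj a ha.1 b hb.1 (ha.2.trans hb.2.symm)
  omega
end

section
/- Let f : ℂ → ℂ, let x_0, x_1, … be pairwise distinct complex numbers, and define the inverse differences by φ_0[x_k] = f(x_k) for all k ≥ 0, and φ_{i+1}[x_0,…,x_i,x_k] = (x_k − x_i)/(φ_i[x_0,…,x_{i-1},x_k] − φ_i[x_0,…,x_i]) for k > i. Fix n ≥ 0 and assume that all inverse differences φ_j[x_0,…,x_{j-1},x_k] for 0 ≤ j ≤ k ≤ n are well defined (every denominator in the recursion is nonzero). Set d_m = φ_m[x_0,…,x_m] and define A_m, B_m by the Wallis recurrence A_{-2} = 0, B_{-2} = 1, A_{-1} = 1, B_{-1} = 0, A_m = d_m·A_{m-1} + (X − x_{m-1})·A_{m-2}, B_m = d_m·B_{m-1} + (X − x_{m-1})·B_{m-2}. Then for every 0 ≤ i ≤ n, f(x_i)·B_n(x_i) = A_n(x_i), i.e. the linearized residual R_n(x) = f(x)B_n(x) − A_n(x)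 vanishes at every interpolation point x_0, …, x_n. -/
/-!
Fix a node `y = x_i`. The residual `r_m = f(y) B_m(y) − A_m(y)` satisfies the Wallis recurrence
`r_m = d_m r_{m-1} + (y − x_{m-1}) r_{m-2}`. The inverse differences `t_j = φ_j[x_0,…,x_{j-1},x_i]`
are exact tails of the continued fraction at `y`: `(t_j − d_j) t_{j+1} = y − x_j`, so the
quantity `t_j r_{j-1} + (y − x_{j-1}) r_{j-2}` is multiplied by `t_{j+1}` at each step. It starts
at `f(y) − φ_0[x_i] = 0`, and at `j = i` we have `t_i = d_i`, so it equals `r_i`. Finally the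
partial numerator `y − x_i` vanishes, so `r_{i+1} = d_{i+1} r_i = 0` and the recurrence keeps
`r_m = 0` for all `m ≥ i`.
-/

open Polynomial

/-- Inverse differences of `f` at the points `xs`: `phi f xs i k` denotes
`φ_i[x_0, …, x_{i-1}, x_k]`, defined by `φ_0[x_k] = f(x_k)` and
`φ_{i+1}[x_0,…,x_i,x_k] = (x_k − x_i)/(φ_i[x_0,…,x_{i-1},x_k] − φ_i[x_0,…,x_i])`. -/
noncomputable def phi (f : ℂ → ℂ) (xs : ℕ → ℂ) : ℕ → ℕ → ℂ
  | 0, k => f (xs k)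
  | (i + 1), k => (xs k - xs i) / (phi f xs i k - phi f xs i i)

section LinearRecurrence

variable {R : Type*} [CommRing R] {a b u : ℕ → R}

theorem linRec_tail_step (hu : ∀ j, u (j + 2) = a j * u (j + 1) + b j * u j) {t : ℕ → R}
    {j : ℕ} (ht : (t j - a j) * t (j + 1) = b (j + 1)) :
    t (j + 1) * u (j + 2) + b (j + 1) * u (j + 1) =
      t (j + 1) * (t j * u (j + 1) + b j * u j) := by
  rw [hu j]
  linear_combination (-u (j + 1)) * ht

theorem linRec_tail_eq_zero (hu : ∀ j, u (j + 2) = a j * u (j + 1) + b j * u j)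
    {t : ℕ → R} {i : ℕ} (ht : ∀ j < i, (t j - a j) * t (j + 1) = b (j + 1))
    (h0 : t 0 * u 1 + b 0 * u 0 = 0) : t i * u (i + 1) + b i * u i = 0 := by
  induction i with
  | zero => exact h0
  | succ i ih =>
    rw [linRec_tail_step hu (ht i i.lt_succ_self),
      ih fun j hj => ht j (hj.trans i.lt_succ_self), mul_zero]

theorem linRec_eq_zero_of_coeff_eq_zero
    (hu : ∀ j, u (j + 2) = a j * u (j + 1) + b j * u j) {k : ℕ}
    (hk : u (k + 1) = 0) (hb : b k = 0) : ∀ m, k + 1 ≤ m → u m = 0 := by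
  have hpair : ∀ m, u (k + 1 + m) = 0 ∧ u (k + 1 + m + 1) = 0 := by
    intro m
    induction m with
    | zero => exact ⟨hk, by rw [hu k, hk, hb]; ring⟩
    | succ m ih =>
      refine ⟨ih.2, ?_⟩
      show u (k + 1 + m + 2) = 0
      rw [hu, ih.1, ih.2]
      ring
  intro m hm
  obtain ⟨l, rfl⟩ := Nat.exists_eq_add_of_le hm
  exact (hpair l).1

end LinearRecurrence

/-- The entry `1` at index `0` (from `A₀ = d₀·A₋₁ + 1·A₋₂`) makes the Wallis recurrence uniform. -/
noncomputable def wallisCoeff (xs : ℕ → ℂ) : ℕ → ℂ[X]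
  | 0 => 1
  | (j + 1) => X - C (xs j)

theorem eval_wallisCoeff_succ (xs : ℕ → ℂ) (y : ℂ) (j : ℕ) :
    (wallisCoeff xs (j + 1)).eval y = y - xs j := by
  simp [wallisCoeff]

theorem wA_add_two (d xs : ℕ → ℂ) (j : ℕ) :
    wA d xs (j + 2) = C (d j) * wA d xs (j + 1) + wallisCoeff xs j * wA d xs j := by
  cases j <;> simp [wA, wallisCoeff]

theorem wB_add_two (d xs : ℕ → ℂ) (j : ℕ) :
    wB d xs (j + 2) = C (d j) * wB d xs (j + 1) + wallisCoeff xs j * wB d xs j := by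
  cases j <;> simp [wB, wallisCoeff]

theorem wallis_residual_add_two (d xs : ℕ → ℂ) (v y : ℂ) (j : ℕ) :
    v * (wB d xs (j + 2)).eval y - (wA d xs (j + 2)).eval y =
      d j * (v * (wB d xs (j + 1)).eval y - (wA d xs (j + 1)).eval y) +
        (wallisCoeff xs j).eval y * (v * (wB d xs j).eval y - (wA d xs j).eval y) := by
  rw [wA_add_two, wB_add_two]
  simp only [eval_add, eval_mul, eval_C]
  ring

theorem sub_mul_phi_succ {f : ℂ → ℂ} {xs : ℕ → ℂ} {j k : ℕ}
    (h : phi f xs j k ≠ phi f xs j j) :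
    (phi f xs j k - phi f xs j j) * phi f xs (j + 1) k = xs k - xs j := by
  rw [phi]
  exact mul_div_cancel₀ _ (sub_ne_zero.mpr h)

theorem thiele_linearized_interpolation_general (f : ℂ → ℂ) (xs : ℕ → ℂ)
    (n : ℕ)
    (hwd : ∀ i k, i < k → k ≤ n → phi f xs i k ≠ phi f xs i i) :
    ∀ i ≤ n,
      f (xs i) * (wB (fun m => phi f xs m m) xs (n + 2)).eval (xs i) =
        (wA (fun m => phi f xs m m) xs (n + 2)).eval (xs i) := by
  intro i hi
  set d : ℕ → ℂ := fun m => phi f xs m m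
  set r : ℕ → ℂ := fun m => f (xs i) * (wB d xs m).eval (xs i) - (wA d xs m).eval (xs i)
  have hrec : ∀ j, r (j + 2) = d j * r (j + 1) + (wallisCoeff xs j).eval (xs i) * r j :=
    wallis_residual_add_two d xs (f (xs i)) (xs i)
  have hr0 : phi f xs 0 i * r 1 + (wallisCoeff xs 0).eval (xs i) * r 0 = 0 := by
    simp [r, wA, wB, wallisCoeff, phi]
  have htail := linRec_tail_eq_zero hrec (t := fun j => phi f xs j i) (fun j hj =>
    (sub_mul_phi_succ (hwd j i hj hi)).trans (eval_wallisCoeff_succ xs (xs i) j).symm) hr0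
  have hri : r (i + 2) = 0 := (hrec i).trans htail
  have hrn := linRec_eq_zero_of_coeff_eq_zero hrec hri
    (by rw [eval_wallisCoeff_succ, sub_self]) (n + 2) (by omega)
  exact sub_eq_zero.mp hrn

/-- Linearized interpolation property of the Thiele interpolating continued fraction:
with `d_m = φ_m[x_0,…,x_m]` the inverse differences of `f`, all of which are assumed to be
well defined up to index `n` (no denominator in the recursion vanishes), the linearized
residual `R_n(x) = f(x)B_n(x) − A_n(x)` vanishes at every interpolation point `x_0, …, x_n`. -/
theorem thiele_linearized_interpolation (f : ℂ → ℂ) (xs : ℕ → ℂ)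
    (hdist : Function.Injective xs) (n : ℕ)
    (hwd : ∀ i k, i < k → k ≤ n → phi f xs i k ≠ phi f xs i i) :
    ∀ i ≤ n,
      f (xs i) * (wB (fun m => phi f xs m m) xs (n + 2)).eval (xs i) =
        (wA (fun m => phi f xs m m) xs (n + 2)).eval (xs i) :=
  thiele_linearized_interpolation_general f xs n hwd
end

section
/- Let f : ℂ → ℂ, let x_0, x_1, … be pairwise distinct complex numbers, define the inverse differences by φ_0[x_k] = f(x_k) and φ_{i+1}[x_0,…,x_i,x_k] = (x_k − x_i)/(φ_i[x_0,…,x_{i-1},x_k] − φ_i[x_0,…,x_i]) for k > i, and assume all inverse differences φ_j[x_0,…,x_{j-1},x_k] for 0 ≤ j ≤ k ≤ n are well defined. With d_m = φ_m[x_0,…,x_m], define A_m, B_m by the Wallis recurrence A_{-2} = 0, B_{-2} = 1, A_{-1} = 1, B_{-1} = 0, A_m = d_m·A_{m-1} + (X − x_{m-1})·A_{m-2}, B_m = d_m·B_{m-1} + (X − x_{m-1})·B_{m-2}. If 0 ≤ i ≤ n and B_n(x_i) ≠ 0, then the nth convergent C_n = A_n/B_n satisfies C_n(x_i) = f(x_i).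 -/
/-!
Fix a node `x_i` and put `r_m = A_m(x_i) − f(x_i) B_m(x_i)`. The residuals `r_m` obey the
Wallis recurrence, and for `j ≤ i` the defining relation of the inverse differences turns it
into `r_j = (φ_j[x_0,…,x_j] − φ_j[x_0,…,x_{j-1},x_i]) r_{j-1}`. At `j = i` the factor vanishes,
so `r_i = 0`; then `r_{i+1} = 0` because its recurrence carries the factor `x_i − x_i`, and two
consecutive zeros propagate to `r_n = 0`, i.e. `A_n(x_i) = f(x_i) B_n(x_i)`.
-/

open Polynomial

noncomputable def wallisResidual (d xs : ℕ → ℂ) (z y : ℂ) (m : ℕ) : ℂ :=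
  (wA d xs m).eval z - y * (wB d xs m).eval z

section Wallis

variable (d xs : ℕ → ℂ) (z y : ℂ)

theorem wallisResidual_one : wallisResidual d xs z y 1 = 1 := by
  simp [wallisResidual, wA, wB]

theorem wallisResidual_two : wallisResidual d xs z y 2 = d 0 - y := by
  simp [wallisResidual, wA, wB]

theorem wallisResidual_add_three (m : ℕ) :
    wallisResidual d xs z y (m + 3) =
      d (m + 1) * wallisResidual d xs z y (m + 2) +
        (z - xs m) * wallisResidual d xs z y (m + 1) := by
  simp only [wallisResidual, wA, wB, eval_add, eval_mul, eval_C, eval_sub, eval_X]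
  ring

end Wallis

theorem eq_zero_of_consecutive_eq_zero {R : Type*} [NonUnitalNonAssocSemiring R] {r a b : ℕ → R}
    (hrec : ∀ m, r (m + 2) = a m * r (m + 1) + b m * r m) {k : ℕ} (h₀ : r k = 0)
    (h₁ : r (k + 1) = 0) {m : ℕ} (hkm : k ≤ m) : r m = 0 := by
  obtain ⟨m, rfl⟩ := Nat.exists_eq_add_of_le hkm
  have hpair : ∀ m, r (k + m) = 0 ∧ r (k + m + 1) = 0 := by
    intro m
    induction m with
    | zero => exact ⟨h₀, h₁⟩
    | succ m ih =>
      refine ⟨ih.2, ?_⟩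
      rw [show k + (m + 1) + 1 = k + m + 2 by omega, hrec, ih.1, ih.2]
      simp
  exact (hpair m).1

theorem phi_succ_mul_sub {f : ℂ → ℂ} {xs : ℕ → ℂ} {i k : ℕ}
    (h : phi f xs i k ≠ phi f xs i i) :
    phi f xs (i + 1) k * (phi f xs i k - phi f xs i i) = xs k - xs i := by
  rw [phi, div_mul_cancel₀ _ (sub_ne_zero.mpr h)]

section Thiele

variable (f : ℂ → ℂ) (xs : ℕ → ℂ) (i : ℕ)

theorem thieleResidual_eq_mul (hwd : ∀ j < i, phi f xs j i ≠ phi f xs j j) {j : ℕ}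
    (hj : j ≤ i) :
    wallisResidual (fun m => phi f xs m m) xs (xs i) (f (xs i)) (j + 2) =
      (phi f xs j j - phi f xs j i) *
        wallisResidual (fun m => phi f xs m m) xs (xs i) (f (xs i)) (j + 1) := by
  induction j with
  | zero => simp [wallisResidual_one, wallisResidual_two, phi]
  | succ j ih =>
    rw [wallisResidual_add_three, ih (by omega), ← phi_succ_mul_sub (hwd j (by omega))]
    ring

theorem thieleResidual_eq_zero (hwd : ∀ j < i, phi f xs j i ≠ phi f xs j j) {m : ℕ}
    (hm : i + 2 ≤ m) : wallisResidual (fun m => phi f xs m m) xs (xs i) (f (xs i)) m = 0 := by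
  have h₀ : wallisResidual (fun m => phi f xs m m) xs (xs i) (f (xs i)) (i + 2) = 0 := by
    simp [thieleResidual_eq_mul f xs i hwd le_rfl]
  have h₁ : wallisResidual (fun m => phi f xs m m) xs (xs i) (f (xs i)) (i + 3) = 0 := by
    simp [wallisResidual_add_three, h₀]
  obtain ⟨m, rfl⟩ := Nat.exists_eq_add_of_le' (show 1 ≤ m by omega)
  exact eq_zero_of_consecutive_eq_zero (r := fun m => wallisResidual _ xs _ _ (m + 1))
    (fun m => wallisResidual_add_three _ xs _ _ m) h₀ h₁ (by omega)

end Thiele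

theorem thiele_interpolation_general (f : ℂ → ℂ) (xs : ℕ → ℂ) (n : ℕ)
    (hwd : ∀ i k, i < k → k ≤ n → phi f xs i k ≠ phi f xs i i)
    (i : ℕ) (hi : i ≤ n)
    (hB : (wB (fun m => phi f xs m m) xs (n + 2)).eval (xs i) ≠ 0) :
    (wA (fun m => phi f xs m m) xs (n + 2)).eval (xs i) /
        (wB (fun m => phi f xs m m) xs (n + 2)).eval (xs i) = f (xs i) := by
  have hres : wallisResidual (fun m => phi f xs m m) xs (xs i) (f (xs i)) (n + 2) = 0 :=
    thieleResidual_eq_zero f xs i (fun j hj => hwd j i hj hi) (by omega)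
  exact (div_eq_iff hB).2 (sub_eq_zero.1 hres)

/-- Interpolation property of the Thiele interpolating continued fraction: with
`d_m = φ_m[x_0,…,x_m]` the inverse differences of `f`, all of which are assumed to be well
defined up to index `n`, the `n`th convergent `C_n = A_n/B_n` satisfies `C_n(x_i) = f(x_i)`
at every node `x_i` (with `0 ≤ i ≤ n`) where the denominator `B_n` does not vanish. -/
theorem thiele_interpolation (f : ℂ → ℂ) (xs : ℕ → ℂ)
    (hdist : Function.Injective xs) (n : ℕ)
    (hwd : ∀ i k, i < k → k ≤ n → phi f xs i k ≠ phi f xs i i)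
    (i : ℕ) (hi : i ≤ n)
    (hB : (wB (fun m => phi f xs m m) xs (n + 2)).eval (xs i) ≠ 0) :
    (wA (fun m => phi f xs m m) xs (n + 2)).eval (xs i) /
        (wB (fun m => phi f xs m m) xs (n + 2)).eval (xs i) = f (xs i) :=
  thiele_interpolation_general f xs n hwd i hi hB
end

section
/- Let f : ℂ → ℂ, let x_0, …, x_{i-1} be pairwise distinct complex numbers with i ≥ 1, let d_0, …, d_i be complex numbers, define A_m, B_m by the Wallis recurrence A_{-2} = 0, B_{-2} = 1, A_{-1} = 1, B_{-1} = 0, A_m = d_m·A_{m-1} + (X − x_{m-1})·A_{m-2}, B_m = d_m·B_{m-1} + (X − x_{m-1})·B_{m-2}, and set R_m(x) = f(x)B_m(x) − A_m(x). If x* ∈ ℂ satisfies x* ∉ {x_0, …, x_{i-1}}, then R_{i-1}(x*) and R_i(x*) do not both vanish. -/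
open Polynomial

/-- The linearized residual `R_m(x) = f(x)·B_m(x) − A_m(x)` of the `m`th convergent of a
Thiele-type continued fraction (index shifted by 2, so `linRes f d xs x (m+2) = R_m(x)`,
`linRes f d xs x 1 = R_{-1}(x) = −1`, `linRes f d xs x 0 = R_{-2}(x) = f(x)`). -/
noncomputable def linRes (f : ℂ → ℂ) (d xs : ℕ → ℂ) (x : ℂ) (k : ℕ) : ℂ :=
  f x * (wB d xs k).eval x - (wA d xs k).eval x

/-!
The Wallis determinant `D_i = A_i B_{i-1} − A_{i-1} B_i` obeys `D_i = −(X − x_{i-1}) D_{i-1}`,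
hence equals `(−1)^{i+1} ∏_{j<i} (X − x_j)`. It is also the cross difference
`R_{i-1} B_i − R_i B_{i-1}` of the residuals, since the `f`-terms cancel. Away from the `x_j`
the product is nonzero, so the two residuals cannot vanish there together.
-/

theorem wA_add_three (d xs : ℕ → ℂ) (m : ℕ) :
    wA d xs (m + 3) = C (d (m + 1)) * wA d xs (m + 2) + (X - C (xs m)) * wA d xs (m + 1) :=
  rfl

theorem wB_add_three (d xs : ℕ → ℂ) (m : ℕ) :
    wB d xs (m + 3) = C (d (m + 1)) * wB d xs (m + 2) + (X - C (xs m)) * wB d xs (m + 1) :=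
  rfl

/-- `wallisDet d xs k = A_k B_{k-1} − A_{k-1} B_k` in the index shift of `wA`, `wB`. -/
noncomputable def wallisDet (d xs : ℕ → ℂ) (k : ℕ) : ℂ[X] :=
  wA d xs (k + 2) * wB d xs (k + 1) - wA d xs (k + 1) * wB d xs (k + 2)

theorem wallisDet_eq (d xs : ℕ → ℂ) (k : ℕ) :
    wallisDet d xs k = (-1) ^ (k + 1) * ∏ j ∈ Finset.range k, (X - C (xs j)) := by
  unfold wallisDet
  induction k with
  | zero => simp [wA, wB]
  | succ k ih =>
    rw [wA_add_three, wB_add_three, Finset.prod_range_succ]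
    linear_combination (C (xs k) - X) * ih

theorem eval_wallisDet_ne_zero (d xs : ℕ → ℂ) (k : ℕ) {x : ℂ} (hx : ∀ j < k, x ≠ xs j) :
    (wallisDet d xs k).eval x ≠ 0 := by
  rw [wallisDet_eq, eval_mul, eval_prod]
  refine mul_ne_zero (by simp) (Finset.prod_ne_zero_iff.mpr fun j hj => ?_)
  simpa [sub_eq_zero] using hx j (Finset.mem_range.mp hj)

theorem linRes_mul_sub_linRes_mul (f : ℂ → ℂ) (d xs : ℕ → ℂ) (x : ℂ) (k : ℕ) :
    linRes f d xs x (k + 1) * (wB d xs (k + 2)).eval x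
        - linRes f d xs x (k + 2) * (wB d xs (k + 1)).eval x =
      (wallisDet d xs k).eval x := by
  simp only [linRes, wallisDet, eval_sub, eval_mul]
  ring

theorem thiele_residuals_not_both_zero_general (i : ℕ) (f : ℂ → ℂ) (d xs : ℕ → ℂ)
    (xstar : ℂ) (hx : ∀ j < i, xstar ≠ xs j) :
    linRes f d xs xstar (i + 1) ≠ 0 ∨ linRes f d xs xstar (i + 2) ≠ 0 := by
  by_contra! h
  apply eval_wallisDet_ne_zero d xs i hx
  rw [← linRes_mul_sub_linRes_mul f, h.1, h.2]
  ring

/-- Away from the interpolation points, the linearized residuals `R_{i-1}` and `R_i` of two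
consecutive Thiele convergents cannot vanish simultaneously: if `x_0, …, x_{i-1}` are
pairwise distinct and `x* ∉ {x_0, …, x_{i-1}}`, then `R_{i-1}(x*) ≠ 0` or `R_i(x*) ≠ 0`. -/
theorem thiele_residuals_not_both_zero (i : ℕ) (hi : 1 ≤ i) (f : ℂ → ℂ) (d xs : ℕ → ℂ)
    (hdist : ∀ j < i, ∀ k < i, xs j = xs k → j = k)
    (xstar : ℂ) (hx : ∀ j < i, xstar ≠ xs j) :
    linRes f d xs xstar (i + 1) ≠ 0 ∨ linRes f d xs xstar (i + 2) ≠ 0 :=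
  thiele_residuals_not_both_zero_general i f d xs xstar hx
end
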